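/- A perfect cuboid exists if and only if there exist positive integers a, b, u with gcd(a, b, u) = 1 and a rational number t satisfying t > a, t > b, t > u and (a + t)·(b + t) > 2·t², such that P_{a,b,u}(t) = 0. -/

import Mathlib

open Polynomial

/-- A perfect cuboid: positive integer edges whose three face diagonals
and space diagonal are (positive) integers. -/
def PerfectCuboid : Prop :=
  ∃ x₁ x₂ x₃ d₁ d₂ d₃ L : ℤ,
    0 < x₁ ∧ 0 < x₂ ∧ 0 < x₃ ∧ 0 < d₁ ∧ 0 < d₂ ∧ 0 < d₃ ∧ 0 < L ∧
    x₂ ^ 2 + x₃ ^ 2 = d₁ ^ 2 ∧ x₃ ^ 2 + x₁ ^ 2 = d₂ ^ 2 ∧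
    x₁ ^ 2 + x₂ ^ 2 = d₃ ^ 2 ∧ x₁ ^ 2 + x₂ ^ 2 + x₃ ^ 2 = L ^ 2

/-- The cuboid polynomial `P_{a,b,u}(t) ∈ ℤ[t]`. -/
noncomputable def cuboidPoly (a b u : ℤ) : Polynomial ℤ :=
  X ^ 12 + C (6 * u ^ 2 - 2 * a ^ 2 - 2 * b ^ 2) * X ^ 10
    + C (u ^ 4 + b ^ 4 + a ^ 4 + 4 * a ^ 2 * u ^ 2 + 4 * b ^ 2 * u ^ 2
        - 12 * a ^ 2 * b ^ 2) * X ^ 8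
    + C (6 * a ^ 4 * u ^ 2 + 6 * b ^ 4 * u ^ 2 - 8 * a ^ 2 * b ^ 2 * u ^ 2
        - 2 * a ^ 2 * u ^ 4 - 2 * b ^ 2 * u ^ 4 - 2 * a ^ 4 * b ^ 2
        - 2 * a ^ 2 * b ^ 4) * X ^ 6
    + C (4 * a ^ 2 * b ^ 4 * u ^ 2 + 4 * a ^ 4 * b ^ 2 * u ^ 2
        - 12 * a ^ 2 * b ^ 2 * u ^ 4 + a ^ 4 * u ^ 4 + b ^ 4 * u ^ 4
        + a ^ 4 * b ^ 4) * X ^ 4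
    + C (6 * a ^ 4 * b ^ 4 * u ^ 2 - 2 * a ^ 4 * b ^ 2 * u ^ 4
        - 2 * a ^ 2 * b ^ 4 * u ^ 4) * X ^ 2
    + C (a ^ 4 * b ^ 4 * u ^ 4)

/-!
Read the cuboid as three points `(x₁, d₁)`, `(x₂, d₂)`, `(d₃, x₃)` on the circle of radius `L`,
subject to `x₁² + x₂² = d₃²`. Parametrising each point by the tangent of its half angle,
`a / t = d₁ / (L + x₁)`, `b / t = d₂ / (L + x₂)`, `u / t = x₃ / (L + d₃)`, gives
`x₁ / L = (t² - a²) / (t² + a²)` and likewise for `x₂ / L`, `d₃ / L`; the relation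
`x₁² + x₂² = d₃²` then becomes `P_{a,b,u}(t) = 0`, and the same parametrisation turns a root back
into a cuboid. The points lie in the open first quadrant exactly when `a, b, u < t`, and
`(a + t)(b + t) > 2t²` says that the first two angles add up to more than `π / 2`, which holds
because `cos² θ₁ + cos² θ₂ = d₃² / L² < 1`. Finally `P_{a,b,u}(t)` is homogeneous of degree 12
in `(a, b, u, t)`, so the scale can be chosen to make `gcd(a, b, u) = 1`.
-/

def cuboidForm {R : Type*} [CommRing R] (a b u t : R) : R :=
  ((t ^ 2 - a ^ 2) * (t ^ 2 + b ^ 2) * (t ^ 2 + u ^ 2)) ^ 2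
    + ((t ^ 2 + a ^ 2) * (t ^ 2 - b ^ 2) * (t ^ 2 + u ^ 2)) ^ 2
    - ((t ^ 2 + a ^ 2) * (t ^ 2 + b ^ 2) * (t ^ 2 - u ^ 2)) ^ 2

theorem cuboidPoly_aeval {R : Type*} [CommRing R] (a b u : ℤ) (t : R) :
    aeval t (cuboidPoly a b u) = cuboidForm (a : R) b u t := by
  simp only [cuboidPoly, cuboidForm, map_add, map_sub, map_mul, map_pow, eq_intCast,
    map_intCast, map_ofNat, aeval_X]
  ring

theorem cuboidForm_mul {R : Type*} [CommRing R] (g a b u t : R) :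
    cuboidForm (g * a) (g * b) (g * u) (g * t) = g ^ 12 * cuboidForm a b u t := by
  unfold cuboidForm
  ring

theorem Int.cast_cuboidForm {R : Type*} [CommRing R] (a b u t : ℤ) :
    ((cuboidForm a b u t : ℤ) : R) = cuboidForm (a : R) b u t := by
  simp only [cuboidForm]
  push_cast
  rfl

theorem sq_sub_sq_mul_eq_of_sq_add_sq {R : Type*} [CommRing R] {x d L : R}
    (h : x ^ 2 + d ^ 2 = L ^ 2) :
    ((L + x) ^ 2 - d ^ 2) * L = ((L + x) ^ 2 + d ^ 2) * x := by
  linear_combination (-(L + x)) * h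

theorem cuboidForm_eq_zero_of_sq_add_sq {R : Type*} [CommRing R] [IsDomain R]
    {a b u t x₁ x₂ d₃ L : R} (hL : L ≠ 0)
    (ha : (t ^ 2 - a ^ 2) * L = (t ^ 2 + a ^ 2) * x₁)
    (hb : (t ^ 2 - b ^ 2) * L = (t ^ 2 + b ^ 2) * x₂)
    (hu : (t ^ 2 - u ^ 2) * L = (t ^ 2 + u ^ 2) * d₃) (h : x₁ ^ 2 + x₂ ^ 2 = d₃ ^ 2) :
    cuboidForm a b u t = 0 := by
  refine (mul_eq_zero.1 (?_ : cuboidForm a b u t * L ^ 2 = 0)).resolve_right (pow_ne_zero 2 hL)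
  unfold cuboidForm
  linear_combination
    ((t ^ 2 - a ^ 2) * L + (t ^ 2 + a ^ 2) * x₁) * ((t ^ 2 + b ^ 2) * (t ^ 2 + u ^ 2)) ^ 2 * ha
    + ((t ^ 2 - b ^ 2) * L + (t ^ 2 + b ^ 2) * x₂) * ((t ^ 2 + a ^ 2) * (t ^ 2 + u ^ 2)) ^ 2 * hb
    - ((t ^ 2 - u ^ 2) * L + (t ^ 2 + u ^ 2) * d₃) * ((t ^ 2 + a ^ 2) * (t ^ 2 + b ^ 2)) ^ 2 * hu
    + ((t ^ 2 + a ^ 2) * (t ^ 2 + b ^ 2) * (t ^ 2 + u ^ 2)) ^ 2 * h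

section OrderedRing

variable {R : Type*} [CommRing R] [LinearOrder R] [IsStrictOrderedRing R]

def IsCuboidRoot (a b u t : R) : Prop :=
  a < t ∧ b < t ∧ u < t ∧ 2 * t ^ 2 < (a + t) * (b + t) ∧ cuboidForm a b u t = 0

theorem isCuboidRoot_intCast {a b u t : ℤ} :
    IsCuboidRoot (a : R) b u t ↔ IsCuboidRoot a b u t := by
  simp only [IsCuboidRoot, ← Int.cast_cuboidForm]
  norm_cast

theorem isCuboidRoot_mul_iff {K : Type*} [Field K] [LinearOrder K] [IsStrictOrderedRing K]
    {g : K} (hg : 0 < g) (a b u t : K) :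
    IsCuboidRoot (g * a) (g * b) (g * u) (g * t) ↔ IsCuboidRoot a b u t := by
  have hprod : (g * a + g * t) * (g * b + g * t) = g ^ 2 * ((a + t) * (b + t)) := by ring
  have hsq : 2 * (g * t) ^ 2 = g ^ 2 * (2 * t ^ 2) := by ring
  simp only [IsCuboidRoot, mul_lt_mul_iff_right₀ hg, hprod, hsq,
    mul_lt_mul_iff_right₀ (pow_pos hg 2), cuboidForm_mul, mul_eq_zero, pow_eq_zero_iff, hg.ne',
    false_or, ne_eq, OfNat.ofNat_ne_zero, not_false_eq_true]

theorem two_mul_lt_of_sq_add_sq {x₁ x₂ d₁ d₂ L : R} (hx₁ : 0 ≤ x₁) (hx₂ : 0 ≤ x₂)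
    (hd₁ : 0 ≤ d₁) (hd₂ : 0 ≤ d₂) (hL : 0 ≤ L) (h₁ : x₁ ^ 2 + d₁ ^ 2 = L ^ 2)
    (h₂ : x₂ ^ 2 + d₂ ^ 2 = L ^ 2) (h : x₁ ^ 2 + x₂ ^ 2 < L ^ 2) :
    2 * ((L + x₁) * (L + x₂)) < (L + x₁ + d₁) * (L + x₂ + d₂) := by
  have hx₂d₁ : x₂ < d₁ := lt_of_pow_lt_pow_left₀ 2 hd₁ (by linarith)
  have hx₁d₂ : x₁ < d₂ := lt_of_pow_lt_pow_left₀ 2 hd₂ (by linarith)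
  have hcs : x₁ * x₂ + (L ^ 2 - x₁ ^ 2 - x₂ ^ 2) ≤ d₁ * d₂ := by
    apply le_of_pow_le_pow_left₀ two_ne_zero (mul_nonneg hd₁ hd₂)
    nlinarith [mul_nonneg (sub_nonneg.2 h.le) (sq_nonneg (x₁ - x₂))]
  nlinarith [mul_nonneg hx₁ (sub_nonneg.2 hx₁d₂.le), mul_nonneg hx₂ (sub_nonneg.2 hx₂d₁.le)]

end OrderedRing

theorem Int.exists_gcd_gcd_one (a b u : ℤ) (ha : a ≠ 0) :
    ∃ g a' b' u' : ℤ, 0 < g ∧ a = g * a' ∧ b = g * b' ∧ u = g * u' ∧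
      Int.gcd a' (Int.gcd b' u') = 1 := by
  have hg : 0 < Int.gcd a (Int.gcd b u) := Int.gcd_pos_of_ne_zero_left _ ha
  set g := Int.gcd a (Int.gcd b u) with hgdef
  clear_value g
  obtain ⟨a', rfl⟩ : (g : ℤ) ∣ a := hgdef ▸ Int.gcd_dvd_left a (Int.gcd b u)
  obtain ⟨b', rfl⟩ : (g : ℤ) ∣ b := hgdef ▸ (Int.gcd_dvd_right _ _).trans (Int.gcd_dvd_left b u)
  obtain ⟨u', rfl⟩ : (g : ℤ) ∣ u := hgdef ▸ (Int.gcd_dvd_right _ _).trans (Int.gcd_dvd_right _ u)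
  refine ⟨g, a', b', u', by exact_mod_cast hg, rfl, rfl, rfl, ?_⟩
  rw [Int.gcd_mul_left, Int.natAbs_natCast, Nat.cast_mul, Int.gcd_mul_left,
    Int.natAbs_natCast] at hgdef
  exact (mul_eq_left₀ hg.ne').1 hgdef.symm

theorem perfectCuboid_iff_exists_sq_add_sq :
    PerfectCuboid ↔ ∃ x₁ x₂ x₃ d₁ d₂ d₃ L : ℤ,
      0 < x₁ ∧ 0 < x₂ ∧ 0 < x₃ ∧ 0 < d₁ ∧ 0 < d₂ ∧ 0 < d₃ ∧ 0 < L ∧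
      x₁ ^ 2 + d₁ ^ 2 = L ^ 2 ∧ x₂ ^ 2 + d₂ ^ 2 = L ^ 2 ∧ d₃ ^ 2 + x₃ ^ 2 = L ^ 2 ∧
      x₁ ^ 2 + x₂ ^ 2 = d₃ ^ 2 := by
  constructor
  · rintro ⟨x₁, x₂, x₃, d₁, d₂, d₃, L, hx₁, hx₂, hx₃, hd₁, hd₂, hd₃, hL, h₁, h₂, h₃, h⟩
    exact ⟨x₁, x₂, x₃, d₁, d₂, d₃, L, hx₁, hx₂, hx₃, hd₁, hd₂, hd₃, hL,
      by linarith, by linarith, by linarith, h₃⟩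
  · rintro ⟨x₁, x₂, x₃, d₁, d₂, d₃, L, hx₁, hx₂, hx₃, hd₁, hd₂, hd₃, hL, h₁, h₂, h₃, h⟩
    exact ⟨x₁, x₂, x₃, d₁, d₂, d₃, L, hx₁, hx₂, hx₃, hd₁, hd₂, hd₃, hL,
      by linarith, by linarith, h, by linarith⟩

theorem PerfectCuboid.exists_isCuboidRoot (h : PerfectCuboid) :
    ∃ a b u t : ℤ, 0 < a ∧ 0 < b ∧ 0 < u ∧ IsCuboidRoot a b u t := by
  obtain ⟨x₁, x₂, x₃, d₁, d₂, d₃, L, hx₁, hx₂, hx₃, hd₁, hd₂, hd₃, hL, h₁, h₂, h₃, h⟩ :=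
    perfectCuboid_iff_exists_sq_add_sq.1 h
  have hd₁L : d₁ < L + x₁ := by nlinarith
  have hd₂L : d₂ < L + x₂ := by nlinarith
  have hx₃L : x₃ < L + d₃ := by nlinarith
  have hangle := two_mul_lt_of_sq_add_sq hx₁.le hx₂.le hd₁.le hd₂.le hL.le h₁ h₂
    (by nlinarith)
  -- the half-angle tangents `d₁ / (L + x₁)`, `d₂ / (L + x₂)`, `x₃ / (L + d₃)` over a common
  -- denominator
  refine ⟨d₁ * (L + x₂) * (L + d₃), (L + x₁) * d₂ * (L + d₃), (L + x₁) * (L + x₂) * x₃,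
    (L + x₁) * (L + x₂) * (L + d₃), by positivity, by positivity, by positivity,
    by gcongr, by gcongr, by gcongr, ?_, ?_⟩
  · linear_combination ((L + x₁) * (L + x₂) * (L + d₃) ^ 2) * hangle
  · exact cuboidForm_eq_zero_of_sq_add_sq hL.ne'
      (by linear_combination ((L + x₂) * (L + d₃)) ^ 2 * sq_sub_sq_mul_eq_of_sq_add_sq h₁)
      (by linear_combination ((L + x₁) * (L + d₃)) ^ 2 * sq_sub_sq_mul_eq_of_sq_add_sq h₂)
      (by linear_combination ((L + x₁) * (L + x₂)) ^ 2 * sq_sub_sq_mul_eq_of_sq_add_sq h₃) h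

theorem PerfectCuboid.of_cuboidForm_eq_zero {a b u t : ℤ} (ha : 0 < a) (hb : 0 < b)
    (hu : 0 < u) (hat : a < t) (hbt : b < t) (hut : u < t) (h : cuboidForm a b u t = 0) :
    PerfectCuboid := by
  unfold cuboidForm at h
  have ht : 0 < t := ha.trans hat
  have hA : 0 < t ^ 2 - a ^ 2 := by nlinarith
  have hB : 0 < t ^ 2 - b ^ 2 := by nlinarith
  have hU : 0 < t ^ 2 - u ^ 2 := by nlinarith
  -- each point is scaled from `(t² - a², 2at) / (t² + a²)` on the unit circle
  refine perfectCuboid_iff_exists_sq_add_sq.2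
    ⟨(t ^ 2 - a ^ 2) * (t ^ 2 + b ^ 2) * (t ^ 2 + u ^ 2),
      (t ^ 2 + a ^ 2) * (t ^ 2 - b ^ 2) * (t ^ 2 + u ^ 2),
      2 * u * t * (t ^ 2 + a ^ 2) * (t ^ 2 + b ^ 2),
      2 * a * t * (t ^ 2 + b ^ 2) * (t ^ 2 + u ^ 2),
      2 * b * t * (t ^ 2 + a ^ 2) * (t ^ 2 + u ^ 2),
      (t ^ 2 + a ^ 2) * (t ^ 2 + b ^ 2) * (t ^ 2 - u ^ 2),
      (t ^ 2 + a ^ 2) * (t ^ 2 + b ^ 2) * (t ^ 2 + u ^ 2),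
      by positivity, by positivity, by positivity, by positivity, by positivity,
      by positivity, by positivity, by ring, by ring, by ring, by linear_combination h⟩

theorem perfect_cuboid_iff_poly_root :
    PerfectCuboid ↔
      ∃ a b u : ℤ, 0 < a ∧ 0 < b ∧ 0 < u ∧
        Int.gcd a (Int.gcd b u) = 1 ∧
        ∃ t : ℚ, (a : ℚ) < t ∧ (b : ℚ) < t ∧ (u : ℚ) < t ∧
          ((a : ℚ) + t) * ((b : ℚ) + t) > 2 * t ^ 2 ∧
          Polynomial.aeval t (cuboidPoly a b u) = 0 := by
  simp only [cuboidPoly_aeval, gt_iff_lt]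
  constructor
  · intro h
    obtain ⟨a, b, u, t, ha, hb, hu, hroot⟩ := h.exists_isCuboidRoot
    obtain ⟨g, a, b, u, hg, rfl, rfl, rfl, hgcd⟩ := Int.exists_gcd_gcd_one a b u ha.ne'
    have hgQ : (0 : ℚ) < g := Int.cast_pos.2 hg
    refine ⟨a, b, u, pos_of_mul_pos_right ha hg.le, pos_of_mul_pos_right hb hg.le,
      pos_of_mul_pos_right hu hg.le, hgcd, t / g, (isCuboidRoot_mul_iff hgQ a b u (t / g)).1 ?_⟩
    rw [mul_div_cancel₀ _ hgQ.ne']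
    exact_mod_cast isCuboidRoot_intCast.2 hroot
  · rintro ⟨a, b, u, ha, hb, hu, -, t, (hroot : IsCuboidRoot (a : ℚ) b u t)⟩
    have hq : (0 : ℚ) < t.den := Nat.cast_pos.2 t.den_pos
    rw [← isCuboidRoot_mul_iff hq, Rat.den_mul_eq_num] at hroot
    obtain ⟨hat, hbt, hut, -, hform⟩ := isCuboidRoot_intCast.1 (by exact_mod_cast hroot :
      IsCuboidRoot ((t.den * a : ℤ) : ℚ) ((t.den * b : ℤ) : ℚ) ((t.den * u : ℤ) : ℚ) t.num)
    exact .of_cuboidForm_eq_zero (by positivity) (by positivity) (by positivity) hat hbt hut hform
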